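/- arXiv:1801.03856 — 3 statements merged into one kernel-verified Lean document; each statement's English description precedes it below -/
import Mathlib

section
/- Let A be a nonzero finite-dimensional evolution algebra over a field K. Then A is simple if and only if A² = A and, for every natural basis B' of A and every element e of B', the smallest ideal of A containing e is A itself (i.e., A is basic simple). -/
open Submodule

section EvolutionAlgebraDefs

variable {K A : Type*} [Field K] [NonUnitalNonAssocCommRing A] [Module K A]
  [SMulCommClass K A A] [IsScalarTower K A A]

/-- A *natural basis* of an evolution algebra: distinct basis vectors multiply to zero. -/
def IsNaturalBasis {ι : Type*} (b : Module.Basis ι K A) : Prop :=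
  ∀ i j : ι, i ≠ j → b i * b j = 0

/-- An *ideal* of the commutative (not necessarily associative or unital) `K`-algebra `A`:
a `K`-subspace closed under multiplication by arbitrary elements of `A`. -/
def IsEvoIdeal (I : Submodule K A) : Prop :=
  ∀ a : A, ∀ x ∈ I, a * x ∈ I

variable (K A)

/-- `A²`: the `K`-linear span of all products of elements of `A`. -/
def sqSpan : Submodule K A :=
  Submodule.span K {z : A | ∃ x y : A, z = x * y}

/-- `A` is *perfect*: `A² = A`. -/
def IsPerfectEvo : Prop := sqSpan K A = ⊤

/-- `A` is *simple*: `A² ≠ 0` and the only ideals of `A` are `0` and `A`. -/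
def IsSimpleEvo : Prop :=
  sqSpan K A ≠ ⊥ ∧ ∀ I : Submodule K A, IsEvoIdeal I → I = ⊥ ∨ I = ⊤

/-- `A` is *irreducible*: it cannot be decomposed as the direct sum of two nonzero ideals. -/
def IsIrreducibleEvo : Prop :=
  ¬ ∃ I J : Submodule K A, IsEvoIdeal I ∧ IsEvoIdeal J ∧ I ≠ ⊥ ∧ J ≠ ⊥ ∧
    I ⊓ J = ⊥ ∧ I ⊔ J = ⊤

variable {A}

/-- The smallest ideal of `A` containing `x`. -/
def idealGenerated (x : A) : Submodule K A :=
  sInf {I : Submodule K A | IsEvoIdeal I ∧ x ∈ I}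

variable {K}

/-- The structure matrix of a basis: entry `(k, i)` is the coefficient of `e k` in `(e i)²`. -/
noncomputable def structMatrix {n : ℕ} (b : Module.Basis (Fin n) K A) :
    Matrix (Fin n) (Fin n) K :=
  Matrix.of fun k i => b.repr (b i * b i) k

end EvolutionAlgebraDefs

section Aux

variable {K A : Type*} [Field K] [NonUnitalNonAssocCommRing A] [Module K A]
  [SMulCommClass K A A] [IsScalarTower K A A]

lemma isEvoIdeal_sqSpan : IsEvoIdeal (sqSpan K A) := by
  intro a x hx
  induction hx using Submodule.span_induction with
  | mem z hz => obtain ⟨u, v, rfl⟩ := hz; exact subset_span ⟨a, u * v, rfl⟩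
  | zero => simpa using (sqSpan K A).zero_mem
  | add x y _ _ hx hy => rw [mul_add]; exact add_mem hx hy
  | smul c x _ hx => rw [mul_smul_comm]; exact smul_mem _ _ hx

lemma isEvoIdeal_idealGenerated (x : A) : IsEvoIdeal (idealGenerated K x) := by
  intro a y hy
  rw [idealGenerated, Submodule.mem_sInf] at hy ⊢
  intro I hI
  exact hI.1 a y (hy I hI)

lemma mem_idealGenerated_self (x : A) : x ∈ idealGenerated K x := by
  rw [idealGenerated, Submodule.mem_sInf]
  exact fun I hI => hI.2

lemma mul_natural_basis {ι : Type*} [Fintype ι] (b : Module.Basis ι K A) (hb : IsNaturalBasis b)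
    (x : A) (j : ι) : x * b j = b.repr x j • (b j * b j) := by
  conv_lhs => rw [← b.sum_repr x]
  rw [Finset.sum_mul, Finset.sum_eq_single j]
  · rw [smul_mul_assoc]
  · intro i _ hij
    rw [smul_mul_assoc, hb i j hij, smul_zero]
  · intro h
    exact absurd (Finset.mem_univ j) h

lemma sqSpan_eq_span_sq {ι : Type*} [Fintype ι] (b : Module.Basis ι K A) (hb : IsNaturalBasis b) :
    sqSpan K A = Submodule.span K (Set.range fun i => b i * b i) := by
  refine le_antisymm ?_ ?_
  · rw [sqSpan, span_le]
    rintro z ⟨x, y, rfl⟩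
    have hxy : x * y = ∑ i, (b.repr x i * b.repr y i) • (b i * b i) := by
      conv_lhs => rw [← b.sum_repr x]
      rw [Finset.sum_mul]
      refine Finset.sum_congr rfl fun i _ => ?_
      rw [smul_mul_assoc, mul_comm (b i) y, mul_natural_basis b hb y i, smul_smul]
    rw [hxy]
    exact sum_mem fun i _ => smul_mem _ _ (subset_span ⟨i, rfl⟩)
  · rw [span_le]
    rintro z ⟨i, rfl⟩
    exact subset_span ⟨b i, b i, rfl⟩

end Aux

/-- A nonzero finite-dimensional evolution algebra is simple if and only if
`A² = A` and `A` is basic simple: for every natural basis and every basis vector, the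
smallest ideal containing that vector is all of `A`. -/
theorem simple_iff_perfect_and_basicSimple
    {K A ι : Type*} [Field K] [NonUnitalNonAssocCommRing A] [Module K A]
    [SMulCommClass K A A] [IsScalarTower K A A] [Nontrivial A] [FiniteDimensional K A]
    (b : Module.Basis ι K A) (hb : IsNaturalBasis b) :
    IsSimpleEvo K A ↔
      sqSpan K A = ⊤ ∧
        ∀ (ι' : Type*) (b' : Module.Basis ι' K A), IsNaturalBasis b' →
          ∀ i : ι', idealGenerated K (b' i) = ⊤ := by
  constructor
  · rintro ⟨hne, hsimp⟩
    refine ⟨(hsimp _ isEvoIdeal_sqSpan).resolve_left hne, ?_⟩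
    intro ι' b' hb' i
    rcases hsimp _ (isEvoIdeal_idealGenerated (b' i)) with h | h
    · exfalso
      have hmem := mem_idealGenerated_self (K := K) (b' i)
      rw [h, Submodule.mem_bot] at hmem
      exact b'.ne_zero i hmem
    · exact h
  · rintro ⟨hperf, hbasic⟩
    refine ⟨by rw [hperf]; exact top_ne_bot, fun I hI => ?_⟩
    by_cases hIbot : I = ⊥
    · exact Or.inl hIbot
    refine Or.inr ?_
    haveI : Fintype ι := FiniteDimensional.fintypeBasisIndex b
    set sq : ι → A := fun i => b i * b i with hsqdef
    have hcard : Fintype.card ι = Module.finrank K A := (Module.finrank_eq_card_basis b).symm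
    have hspan : ⊤ ≤ Submodule.span K (Set.range sq) := by
      rw [← sqSpan_eq_span_sq b hb, hperf]
    let b2 : Module.Basis ι K A := basisOfTopLeSpanOfCardEqFinrank sq hspan hcard
    have hb2 : ⇑b2 = sq := coe_basisOfTopLeSpanOfCardEqFinrank sq hspan hcard
    classical
    set S : Set ι := {j | ∃ y ∈ I, b.repr y j ≠ 0} with hSdef
    haveI : Fintype S := Fintype.ofFinite S
    -- I is contained in the span of the basis vectors indexed by S
    have h1 : I ≤ Submodule.span K (Set.range fun j : S => b j) := by
      intro y hy
      have : Set.range (fun j : S => b j) = b '' S := by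
        rw [Set.image_eq_range]
      rw [this, Module.Basis.mem_span_image]
      intro j hj
      rw [Finset.mem_coe, Finsupp.mem_support_iff] at hj
      exact ⟨y, hy, hj⟩
    -- the squares of the basis vectors indexed by S lie in I
    have h2 : Submodule.span K (Set.range fun j : S => sq j) ≤ I := by
      rw [span_le]
      rintro z ⟨⟨j, y, hyI, hyj⟩, rfl⟩
      have hmul : y * b j = b.repr y j • sq j := mul_natural_basis b hb y j
      have hin : b.repr y j • sq j ∈ I := by
        rw [← hmul, mul_comm]
        exact hI (b j) y hyI
      have := I.smul_mem (b.repr y j)⁻¹ hin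
      rwa [inv_smul_smul₀ hyj] at this
    have hfr1 : Module.finrank K (Submodule.span K (Set.range fun j : S => b j)) =
        Fintype.card S :=
      finrank_span_eq_card (b.linearIndependent.comp _ Subtype.val_injective)
    have hfr2 : Module.finrank K (Submodule.span K (Set.range fun j : S => sq j)) =
        Fintype.card S := by
      have : LinearIndependent K fun j : S => sq j := by
        rw [← hb2]
        exact b2.linearIndependent.comp _ Subtype.val_injective
      exact finrank_span_eq_card this
    have heq : Submodule.span K (Set.range fun j : S => sq j) =
        Submodule.span K (Set.range fun j : S => b j) :=
      Submodule.eq_of_le_of_finrank_le (h2.trans h1) (by rw [hfr1, hfr2])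
    have hIeq : I = Submodule.span K (Set.range fun j : S => b j) :=
      le_antisymm h1 (heq ▸ h2)
    -- S is nonempty
    obtain ⟨y, hyI, hy0⟩ := Submodule.exists_mem_ne_zero_of_ne_bot hIbot
    have : b.repr y ≠ 0 := fun h => hy0 (by simpa [h] using (b.repr.symm_apply_apply y).symm)
    obtain ⟨j, hj⟩ := Finsupp.ne_iff.mp this
    rw [Finsupp.coe_zero, Pi.zero_apply] at hj
    have hjS : j ∈ S := ⟨y, hyI, hj⟩
    have hbj : b j ∈ I := by
      rw [hIeq]
      exact subset_span ⟨⟨j, hjS⟩, rfl⟩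
    have hle : idealGenerated K (b j) ≤ I := sInf_le ⟨hI, hbj⟩
    -- transfer the basis to an index type in the right universe
    let e : ι ≃ ULift (Fin (Fintype.card ι)) := (Fintype.equivFin ι).trans Equiv.ulift.symm
    have hb' : IsNaturalBasis (b.reindex e) := by
      intro i' j' hij
      rw [Module.Basis.reindex_apply, Module.Basis.reindex_apply]
      exact hb _ _ (e.symm.injective.ne hij)
    have htop := hbasic _ (b.reindex e) hb' (e j)
    rw [Module.Basis.reindex_apply, Equiv.symm_apply_apply] at htop
    rw [htop] at hle
    exact top_le_iff.mp hle
end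

section
/- Let n be an even natural number with n ≥ 4, and let A be an n-dimensional perfect, irreducible evolution algebra over a field K with natural basis B = (e_1, …, e_n). Suppose I := span{e_1, …, e_{n/2}} is an ideal of A and no proper ideal of A spanned by a subset of B has dimension greater than n/2; write M_B in block form ((W, U), (0, Y)) with W, U, Y of size (n/2)×(n/2). If B' is any natural basis of A whose structure matrix has the same block form ((W', U'), (0, Y')), then W' has the same number of zero entries as W, U' the same number of zero entries as U, and Y' the same number of zero entries as Y. -/
set_option linter.unusedSectionVars false


open Submodule

section AuxLemmas
variable {K A : Type*} [Field K] [NonUnitalNonAssocCommRing A] [Module K A]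
  [SMulCommClass K A A] [IsScalarTower K A A]

theorem mul_expand {n : ℕ} (b : Module.Basis (Fin n) K A) (hb : IsNaturalBasis b) (x y : A) :
    x * y = ∑ i : Fin n, (b.repr x i * b.repr y i) • (b i * b i) := by
  conv_lhs => rw [← b.sum_repr x, ← b.sum_repr y]
  rw [Finset.sum_mul]
  refine Finset.sum_congr rfl fun i _ => ?_
  rw [Finset.mul_sum]
  rw [Finset.sum_eq_single i]
  · rw [smul_mul_assoc, mul_smul_comm, smul_smul]
  · intro j _ hj
    rw [smul_mul_assoc, mul_smul_comm, hb i j (Ne.symm hj), smul_zero, smul_zero]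
  · intro h; exact absurd (Finset.mem_univ i) h

theorem squares_span {n : ℕ} (b : Module.Basis (Fin n) K A) (hb : IsNaturalBasis b)
    (hperf : IsPerfectEvo K A) :
    ⊤ ≤ span K (Set.range fun i => b i * b i) := by
  rw [← hperf]
  rw [sqSpan]
  refine span_le.mpr ?_
  rintro z ⟨x, y, rfl⟩
  rw [mul_expand b hb x y]
  exact sum_mem fun i _ => smul_mem _ _ (subset_span ⟨i, rfl⟩)

noncomputable def squaresBasis {n : ℕ} (b : Module.Basis (Fin n) K A) (hb : IsNaturalBasis b)
    (hperf : IsPerfectEvo K A) : Module.Basis (Fin n) K A :=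
  basisOfTopLeSpanOfCardEqFinrank (fun i => b i * b i) (squares_span b hb hperf)
    (by rw [Fintype.card_fin, Module.finrank_eq_card_basis b, Fintype.card_fin])

theorem squares_li {n : ℕ} (b : Module.Basis (Fin n) K A) (hb : IsNaturalBasis b)
    (hperf : IsPerfectEvo K A) :
    LinearIndependent K (fun i : Fin n => b i * b i) := by
  have := (squaresBasis b hb hperf).linearIndependent
  rwa [squaresBasis, coe_basisOfTopLeSpanOfCardEqFinrank] at this

/-- Uniqueness of natural basis for perfect evolution algebras. -/
theorem natural_basis_unique {n : ℕ} (b b' : Module.Basis (Fin n) K A)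
    (hb : IsNaturalBasis b) (hb' : IsNaturalBasis b') (hperf : IsPerfectEvo K A) :
    ∃ (σ : Equiv.Perm (Fin n)) (c : Fin n → K),
      (∀ i, c i ≠ 0) ∧ ∀ i, b' i = c i • b (σ i) := by
  set a : Fin n → Fin n → K := fun k i => b.repr (b' i) k with ha
  have hdisj : ∀ i j, i ≠ j → ∀ k, a k i * a k j = 0 := by
    intro i j hij k
    have h0 : ∑ m : Fin n, (a m i * a m j) • (b m * b m) = 0 := by
      rw [← mul_expand b hb (b' i) (b' j), hb' i j hij]
    exact (Fintype.linearIndependent_iff.mp (squares_li b hb hperf) _ h0) k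
  have hexist : ∀ i, ∃ k, a k i ≠ 0 := by
    intro i
    by_contra hc
    push_neg at hc
    have : b.repr (b' i) = 0 := Finsupp.ext fun k => hc k
    exact b'.ne_zero i (by simpa [this] using (b.repr.injective (by simp [this]) : b' i = 0))
  choose f hf using hexist
  have finj : Function.Injective f := by
    intro i j hij
    by_contra hne
    have h1 := hdisj i j hne (f i)
    have h2 : a (f i) j ≠ 0 := by rw [hij]; exact hf j
    exact (mul_ne_zero (hf i) h2) h1
  let σ : Equiv.Perm (Fin n) := Equiv.ofBijective f (Finite.injective_iff_bijective.mp finj)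
  have hsingle : ∀ i k, k ≠ f i → a k i = 0 := by
    intro i k hk
    obtain ⟨j, rfl⟩ : ∃ j, f j = k := σ.surjective k
    have hji : j ≠ i := fun h => hk (by rw [h])
    have := hdisj i j (Ne.symm hji) (f j)
    rcases mul_eq_zero.mp this with h | h
    · exact h
    · exact absurd h (hf j)
  refine ⟨σ, fun i => a (f i) i, fun i => hf i, fun i => ?_⟩
  have : b' i = ∑ k : Fin n, a k i • b k := (b.sum_repr (b' i)).symm
  rw [this, Finset.sum_eq_single (f i)]
  · rfl
  · intro k _ hk; rw [hsingle i k hk, zero_smul]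
  · intro h; exact absurd (Finset.mem_univ _) h

theorem repr_rel {n : ℕ} (b b' : Module.Basis (Fin n) K A) (σ : Equiv.Perm (Fin n))
    (c : Fin n → K) (hc : ∀ i, c i ≠ 0) (hrel : ∀ i, b' i = c i • b (σ i))
    (x : A) (k : Fin n) : b'.repr x k = (c k)⁻¹ * b.repr x (σ k) := by
  have hmaps : (b'.coord k) = (c k)⁻¹ • (b.coord (σ k)) := by
    refine b'.ext fun i => ?_
    rw [Module.Basis.coord_apply, b'.repr_self, LinearMap.smul_apply, Module.Basis.coord_apply, hrel i,
      map_smul, b.repr_self, Finsupp.single_apply, Finsupp.smul_apply, Finsupp.single_apply]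
    by_cases h : i = k
    · subst h; simp [inv_mul_cancel₀ (hc i)]
    · have : ¬ σ i = σ k := fun hh => h (σ.injective hh)
      simp [h, this]
  have := DFunLike.congr_fun hmaps x
  simpa [Module.Basis.coord_apply] using this

theorem structMatrix_rel {n : ℕ} (b b' : Module.Basis (Fin n) K A) (σ : Equiv.Perm (Fin n))
    (c : Fin n → K) (hc : ∀ i, c i ≠ 0) (hrel : ∀ i, b' i = c i • b (σ i))
    (k j : Fin n) :
    structMatrix b' k j = (c k)⁻¹ * ((c j * c j) * structMatrix b (σ k) (σ j)) := by
  have hsq : b' j * b' j = (c j * c j) • (b (σ j) * b (σ j)) := by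
    rw [hrel j, smul_mul_assoc, mul_smul_comm, smul_smul]
  rw [structMatrix, Matrix.of_apply, repr_rel b b' σ c hc hrel, hsq, map_smul,
    Finsupp.smul_apply, structMatrix, Matrix.of_apply, smul_eq_mul]

theorem structMatrix_zero_iff {n : ℕ} (b b' : Module.Basis (Fin n) K A) (σ : Equiv.Perm (Fin n))
    (c : Fin n → K) (hc : ∀ i, c i ≠ 0) (hrel : ∀ i, b' i = c i • b (σ i))
    (k j : Fin n) :
    structMatrix b' k j = 0 ↔ structMatrix b (σ k) (σ j) = 0 := by
  rw [structMatrix_rel b b' σ c hc hrel k j]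
  simp [hc k, hc j, inv_eq_zero, mul_eq_zero]

theorem isEvoIdeal_span_of_sq {n : ℕ} (b : Module.Basis (Fin n) K A) (hb : IsNaturalBasis b)
    (t : Set (Fin n)) (hsq : ∀ j ∈ t, b j * b j ∈ span K (⇑b '' t)) :
    IsEvoIdeal (span K (⇑b '' t)) := by
  intro a x hx
  induction hx using span_induction with
  | mem z hz =>
    obtain ⟨j, hj, rfl⟩ := hz
    have : a * b j = (b.repr a j) • (b j * b j) := by
      rw [mul_expand b hb a (b j)]
      rw [Finset.sum_eq_single j]
      · rw [b.repr_self, Finsupp.single_eq_same, mul_one]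
      · intro k _ hk
        have : b.repr (b j) k = 0 := by
          rw [b.repr_self, Finsupp.single_apply, if_neg (fun h => hk h.symm)]
        rw [this, mul_zero, zero_smul]
      · intro h; exact absurd (Finset.mem_univ _) h
    rw [this]
    exact smul_mem _ _ (hsq j hj)
  | zero => rw [mul_zero]; exact zero_mem _
  | add y z _ _ hy hz => rw [mul_add]; exact add_mem hy hz
  | smul r y _ hy => rw [mul_smul_comm]; exact smul_mem _ _ hy

theorem isEvoIdeal_sup {I J : Submodule K A} (hI : IsEvoIdeal I) (hJ : IsEvoIdeal J) :
    IsEvoIdeal (I ⊔ J) := by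
  intro a x hx
  obtain ⟨y, hy, z, hz, rfl⟩ := mem_sup.mp hx
  rw [mul_add]
  exact add_mem (mem_sup_left (hI a y hy)) (mem_sup_right (hJ a z hz))

theorem finrank_span_basis_image {n : ℕ} (b : Module.Basis (Fin n) K A) (t : Finset (Fin n)) :
    Module.finrank K ↥(span K (⇑b '' ↑t)) = t.card := by
  classical
  have hli : LinearIndependent K ((↑) : (⇑b '' ↑t) → A) := by
    have h1 : LinearIndependent K (fun x : (↑t : Set (Fin n)) => b x) :=
      b.linearIndependent.comp _ Subtype.val_injective
    have := h1.linearIndepOn_id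
    rwa [← Set.image_eq_range] at this
  rw [finrank_span_set_eq_card hli]
  rw [Set.toFinset_image]
  rw [Finset.card_image_of_injective _ b.injective]
  simp

end AuxLemmas

/-- Let `A` be an `n`-dimensional perfect irreducible evolution algebra
(`n` even, `n ≥ 4`) with a maximal `(n/2)`-basic ideal spanned by the first half of the
natural basis, so the structure matrix has block form `((W, U), (0, Y))`. For any natural
basis whose structure matrix has the same block form, the numbers of zero entries in the
blocks `W`, `U` and `Y` are the same as for the original basis. -/
theorem half_dim_zero_counts_invariant
    {K A : Type*} [Field K] [NonUnitalNonAssocCommRing A] [Module K A]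
    [SMulCommClass K A A] [IsScalarTower K A A]
    {n : ℕ} (hn : 4 ≤ n) (hne : Even n)
    (b : Module.Basis (Fin n) K A) (hb : IsNaturalBasis b)
    (hperf : IsPerfectEvo K A) (hirr : IsIrreducibleEvo K A)
    (hI : IsEvoIdeal (Submodule.span K (⇑b '' {j : Fin n | (j : ℕ) < n / 2})))
    (hmax : ∀ (J : Submodule K A) (t : Set (Fin n)),
      IsEvoIdeal J → J ≠ ⊤ → J = Submodule.span K (⇑b '' t) →
        Module.finrank K ↥J ≤ n / 2)
    (b' : Module.Basis (Fin n) K A) (hb' : IsNaturalBasis b')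
    (hblock : ∀ k j : Fin n, n / 2 ≤ (k : ℕ) → (j : ℕ) < n / 2 →
      structMatrix b' k j = 0) :
    {p : Fin n × Fin n | (p.1 : ℕ) < n / 2 ∧ (p.2 : ℕ) < n / 2 ∧
          structMatrix b' p.1 p.2 = 0}.ncard =
        {p : Fin n × Fin n | (p.1 : ℕ) < n / 2 ∧ (p.2 : ℕ) < n / 2 ∧
          structMatrix b p.1 p.2 = 0}.ncard ∧
      {p : Fin n × Fin n | (p.1 : ℕ) < n / 2 ∧ n / 2 ≤ (p.2 : ℕ) ∧
          structMatrix b' p.1 p.2 = 0}.ncard =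
        {p : Fin n × Fin n | (p.1 : ℕ) < n / 2 ∧ n / 2 ≤ (p.2 : ℕ) ∧
          structMatrix b p.1 p.2 = 0}.ncard ∧
      {p : Fin n × Fin n | n / 2 ≤ (p.1 : ℕ) ∧ n / 2 ≤ (p.2 : ℕ) ∧
          structMatrix b' p.1 p.2 = 0}.ncard =
        {p : Fin n × Fin n | n / 2 ≤ (p.1 : ℕ) ∧ n / 2 ≤ (p.2 : ℕ) ∧
          structMatrix b p.1 p.2 = 0}.ncard := by
  classical
  obtain ⟨m, hm⟩ := hne
  have hm2 : n / 2 = m := by omega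
  obtain ⟨σ, c, hc, hrel⟩ := natural_basis_unique b b' hb hb' hperf
  have hbσ : ∀ i, b (σ i) = (c i)⁻¹ • b' i := fun i => by
    rw [hrel i, smul_smul, inv_mul_cancel₀ (hc i), one_smul]
  set mid : Fin n := ⟨n / 2, by omega⟩ with hmid
  set Lf : Finset (Fin n) := Finset.Iio mid with hLf
  have hmemL : ∀ j : Fin n, j ∈ Lf ↔ (j : ℕ) < n / 2 := by
    intro j; rw [hLf, Finset.mem_Iio, Fin.lt_def]
  have hLcard : Lf.card = n / 2 := by rw [hLf, Fin.card_Iio]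
  have hLset : {j : Fin n | (j : ℕ) < n / 2} = ↑Lf := by
    ext j; simp [hmemL]
  have hI' : IsEvoIdeal (span K (⇑b '' ↑Lf)) := by rwa [hLset] at hI
  set Sf : Finset (Fin n) := Lf.image σ with hSf
  have hScard : Sf.card = n / 2 := by
    rw [hSf, Finset.card_image_of_injective _ σ.injective, hLcard]
  have hspanS : span K (⇑b '' ↑Sf) = span K (⇑b' '' ↑Lf) := by
    apply le_antisymm <;> rw [span_le] <;> rintro x ⟨j, hj, rfl⟩
    · obtain ⟨j', hj', rfl⟩ := Finset.mem_image.mp hj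
      rw [hbσ j']
      exact smul_mem _ _ (subset_span ⟨j', hj', rfl⟩)
    · rw [hrel j]
      refine smul_mem _ _ (subset_span ⟨σ j, ?_, rfl⟩)
      exact Finset.mem_image_of_mem σ hj
  have hSideal : IsEvoIdeal (span K (⇑b '' ↑Sf)) := by
    apply isEvoIdeal_span_of_sq b hb
    intro q hq
    obtain ⟨j, hj, rfl⟩ := Finset.mem_image.mp hq
    have hsq : b (σ j) * b (σ j) = ((c j)⁻¹ * (c j)⁻¹) • (b' j * b' j) := by
      rw [hbσ j, smul_mul_assoc, mul_smul_comm, smul_smul]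
    rw [hspanS, hsq]
    refine smul_mem _ _ ?_
    rw [show b' j * b' j = ∑ k, (b'.repr (b' j * b' j)) k • b' k from (b'.sum_repr _).symm]
    refine sum_mem fun k _ => ?_
    by_cases hk : (k : ℕ) < n / 2
    · exact smul_mem _ _ (subset_span ⟨k, (hmemL k).mpr hk, rfl⟩)
    · have hz : structMatrix b' k j = 0 :=
        hblock k j (le_of_not_gt hk) ((hmemL j).mp hj)
      rw [show (b'.repr (b' j * b' j)) k = structMatrix b' k j from rfl, hz, zero_smul]
      exact zero_mem _
  by_cases hSL : Sf = Lf
  · -- σ preserves the lower half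
    have hσL : ∀ j : Fin n, (σ j : ℕ) < n / 2 ↔ (j : ℕ) < n / 2 := by
      intro j
      constructor
      · intro hlt
        have : σ j ∈ Sf := by rw [hSL]; exact (hmemL _).mpr hlt
        obtain ⟨j', hj', hje⟩ := Finset.mem_image.mp this
        rw [σ.injective hje] at hj'
        exact (hmemL j).mp hj'
      · intro hlt
        have : σ j ∈ Sf := Finset.mem_image_of_mem σ ((hmemL j).mpr hlt)
        rw [hSL] at this
        exact (hmemL _).mp this
    have hinj : Function.Injective (fun p : Fin n × Fin n => (σ p.1, σ p.2)) := by
      intro p q hpq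
      rw [Prod.ext_iff] at hpq ⊢
      exact ⟨σ.injective hpq.1, σ.injective hpq.2⟩
    have key : ∀ P Q : Fin n → Prop, (∀ j, P (σ j) ↔ P j) → (∀ j, Q (σ j) ↔ Q j) →
        {p : Fin n × Fin n | P p.1 ∧ Q p.2 ∧ structMatrix b' p.1 p.2 = 0}.ncard =
        {p : Fin n × Fin n | P p.1 ∧ Q p.2 ∧ structMatrix b p.1 p.2 = 0}.ncard := by
      intro P Q hP hQ
      have himg : (fun p : Fin n × Fin n => (σ p.1, σ p.2)) ''
          {p : Fin n × Fin n | P p.1 ∧ Q p.2 ∧ structMatrix b' p.1 p.2 = 0} =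
          {p : Fin n × Fin n | P p.1 ∧ Q p.2 ∧ structMatrix b p.1 p.2 = 0} := by
        ext ⟨k, j⟩
        constructor
        · rintro ⟨⟨k', j'⟩, ⟨h1, h2, h3⟩, heq⟩
          obtain ⟨rfl, rfl⟩ : σ k' = k ∧ σ j' = j := by
            simpa [Prod.ext_iff] using heq
          exact ⟨(hP k').mpr h1, (hQ j').mpr h2,
            (structMatrix_zero_iff b b' σ c hc hrel k' j').mp h3⟩
        · rintro ⟨h1, h2, h3⟩
          refine ⟨(σ.symm k, σ.symm j), ⟨?_, ?_, ?_⟩, by simp⟩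
          · have := hP (σ.symm k); rw [Equiv.apply_symm_apply] at this
            exact this.mp h1
          · have := hQ (σ.symm j); rw [Equiv.apply_symm_apply] at this
            exact this.mp h2
          · rw [structMatrix_zero_iff b b' σ c hc hrel, Equiv.apply_symm_apply,
              Equiv.apply_symm_apply]
            exact h3
      rw [← himg, Set.ncard_image_of_injective _ hinj]
    have hσH : ∀ j : Fin n, n / 2 ≤ (σ j : ℕ) ↔ n / 2 ≤ (j : ℕ) := fun j => by
      have := hσL j; omega
    exact ⟨key (fun x => (x : ℕ) < n / 2) (fun x => (x : ℕ) < n / 2) hσL hσL,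
      key (fun x => (x : ℕ) < n / 2) (fun x => n / 2 ≤ (x : ℕ)) hσL hσH,
      key (fun x => n / 2 ≤ (x : ℕ)) (fun x => n / 2 ≤ (x : ℕ)) hσH hσH⟩
  · -- the image of the lower half must be the upper half; derive a contradiction
    exfalso
    have hnotsub : ¬ Sf ⊆ Lf := fun hsub =>
      hSL (Finset.eq_of_subset_of_card_le hsub (by omega))
    obtain ⟨x, hxS, hxL⟩ := Finset.not_subset.mp hnotsub
    have hssub : Lf ⊂ Sf ∪ Lf := by
      refine Finset.ssubset_iff_of_subset Finset.subset_union_right |>.mpr ?_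
      exact ⟨x, Finset.mem_union_left _ hxS, hxL⟩
    have hTcard : n / 2 < (Sf ∪ Lf).card := by
      have := Finset.card_lt_card hssub; omega
    have hJideal : IsEvoIdeal (span K (⇑b '' ↑(Sf ∪ Lf))) := by
      rw [Finset.coe_union, Set.image_union, span_union]
      exact isEvoIdeal_sup hSideal hI'
    have hJtop : span K (⇑b '' ↑(Sf ∪ Lf)) = ⊤ := by
      by_contra hne'
      have := hmax _ ↑(Sf ∪ Lf) hJideal hne' rfl
      rw [finrank_span_basis_image] at this
      omega
    have hTuniv : Sf ∪ Lf = Finset.univ := by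
      have h1 := finrank_span_basis_image b (Sf ∪ Lf)
      rw [hJtop, finrank_top, Module.finrank_eq_card_basis b, Fintype.card_fin] at h1
      exact Finset.eq_univ_of_card _ (by rw [← h1, Fintype.card_fin])
    have hcomp : Sf = Lfᶜ := by
      have hsub : Lfᶜ ⊆ Sf := by
        intro y hy
        have hy' : y ∈ Sf ∪ Lf := by rw [hTuniv]; exact Finset.mem_univ y
        rcases Finset.mem_union.mp hy' with h | h
        · exact h
        · exact absurd h (Finset.mem_compl.mp hy)
      have hcc : Lfᶜ.card = n / 2 := by
        rw [Finset.card_compl, Fintype.card_fin, hLcard]; omega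
      exact (Finset.eq_of_subset_of_card_le hsub (by omega)).symm
    have hU : ∀ k j : Fin n, (k : ℕ) < n / 2 → n / 2 ≤ (j : ℕ) →
        structMatrix b k j = 0 := by
      intro k j hk hj
      have hk' : ¬ ((σ.symm k : ℕ) < n / 2) := by
        intro hlt
        have hmem : σ (σ.symm k) ∈ Sf :=
          Finset.mem_image_of_mem σ ((hmemL _).mpr hlt)
        rw [Equiv.apply_symm_apply, hcomp, Finset.mem_compl] at hmem
        exact hmem ((hmemL k).mpr hk)
      have hj' : (σ.symm j : ℕ) < n / 2 := by
        have hjS : j ∈ Sf := by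
          rw [hcomp, Finset.mem_compl]
          intro hmem
          have := (hmemL j).mp hmem; omega
        obtain ⟨j'', hj'', hje⟩ := Finset.mem_image.mp hjS
        have hre : σ.symm j = j'' := by rw [← hje, Equiv.symm_apply_apply]
        rw [hre]
        exact (hmemL j'').mp hj''
      have hz := hblock (σ.symm k) (σ.symm j) (le_of_not_gt hk') hj'
      rw [structMatrix_zero_iff b b' σ c hc hrel, Equiv.apply_symm_apply,
        Equiv.apply_symm_apply] at hz
      exact hz
    have hCideal : IsEvoIdeal (span K (⇑b '' ↑(Lfᶜ))) := by
      apply isEvoIdeal_span_of_sq b hb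
      intro j hj
      rw [show b j * b j = ∑ k, (b.repr (b j * b j)) k • b k from (b.sum_repr _).symm]
      refine sum_mem fun k _ => ?_
      by_cases hk : (k : ℕ) < n / 2
      · have hjge : n / 2 ≤ (j : ℕ) := by
          have := Finset.mem_compl.mp hj
          rw [hmemL] at this; omega
        have hz : (b.repr (b j * b j)) k = 0 := hU k j hk hjge
        rw [hz, zero_smul]; exact zero_mem _
      · refine smul_mem _ _ (subset_span ⟨k, ?_, rfl⟩)
        rw [Finset.coe_compl, Set.mem_compl_iff, Finset.mem_coe, hmemL]
        omega
    have hne1 : span K (⇑b '' ↑Lf) ≠ ⊥ := by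
      rw [Submodule.ne_bot_iff]
      refine ⟨b ⟨0, by omega⟩, subset_span ⟨⟨0, by omega⟩, ?_, rfl⟩, b.ne_zero _⟩
      rw [Finset.mem_coe, hmemL]; simp; omega
    have hne2 : span K (⇑b '' ↑(Lfᶜ)) ≠ ⊥ := by
      rw [Submodule.ne_bot_iff]
      refine ⟨b ⟨n / 2, by omega⟩, subset_span ⟨⟨n / 2, by omega⟩, ?_, rfl⟩, b.ne_zero _⟩
      rw [Finset.mem_coe, Finset.mem_compl, hmemL]; simp
    have hdis : span K (⇑b '' ↑Lf) ⊓ span K (⇑b '' ↑(Lfᶜ)) = ⊥ := by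
      refine disjoint_iff.mp (b.linearIndependent.disjoint_span_image ?_)
      rw [Finset.coe_compl]
      exact disjoint_compl_right
    have hsup : span K (⇑b '' ↑Lf) ⊔ span K (⇑b '' ↑(Lfᶜ)) = ⊤ := by
      rw [← span_union, ← Set.image_union, ← Finset.coe_union, Finset.union_compl,
        Finset.coe_univ, Set.image_univ, b.span_eq]
    exact hirr ⟨_, _, hI', hCideal, hne1, hne2, hdis, hsup⟩
end

section
/- Let A be an n-dimensional perfect evolution algebra over a field K with natural basis B = (e_1, …, e_n) and structure constants ω, and suppose I := span{e_1, …, e_{n−1}} is an ideal of A, so that ω_{nj} = 0 for all j ≤ n−1 and ω_{nn} ≠ 0. For each index k set D¹(k) = { l : ω_{lk} ≠ 0 }. Then the following are equivalent: (a) there exists a natural basis B' = (e'_1, …, e'_n) of A such that span{e'_1, …, e'_{n−1}} is an ideal of A and the number of zero entries in the upper-left (n−1)×(n−1) block of M_{B'} differs from the number of zero entries in the upper-left (n−1)×(n−1) block of M_B; (b) there exists i ∈ {1, …, n−1} such that ω_{ij} = 0 for every j ≠ i (that is, i ∉ D¹(j) for every j ≠ i) and |D¹(i)| ≠ |D¹(n)|.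 -/
open Submodule

section MainAux

variable {K A : Type*} [Field K] [NonUnitalNonAssocCommRing A] [Module K A]
  [SMulCommClass K A A] [IsScalarTower K A A]

lemma evo_mul_eq_sum_sq {n : ℕ} (b : Module.Basis (Fin n) K A) (hb : IsNaturalBasis b) (x y : A) :
    x * y = ∑ k, (b.repr x k * b.repr y k) • (b k * b k) := by
  conv_lhs => rw [← b.sum_repr x, ← b.sum_repr y]
  rw [Finset.sum_mul_sum]
  refine Finset.sum_congr rfl fun i _ => ?_
  rw [Finset.sum_eq_single i]
  · rw [smul_mul_assoc, mul_smul_comm, smul_smul]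
  · intro j _ hj
    rw [smul_mul_assoc, mul_smul_comm, hb i j fun h => hj h.symm, smul_zero, smul_zero]
  · intro h; exact absurd (Finset.mem_univ i) h

lemma evo_sqSpan_eq {n : ℕ} (b : Module.Basis (Fin n) K A) (hb : IsNaturalBasis b) :
    sqSpan K A = span K (Set.range fun k => b k * b k) := by
  apply le_antisymm
  · rw [sqSpan, span_le]
    rintro z ⟨x, y, rfl⟩
    rw [evo_mul_eq_sum_sq b hb]
    exact Submodule.sum_mem _ fun k _ =>
      Submodule.smul_mem _ _ (subset_span ⟨k, rfl⟩)
  · rw [span_le]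
    rintro z ⟨k, rfl⟩
    exact subset_span ⟨b k, b k, rfl⟩

noncomputable def evoSqBasis {n : ℕ} (b : Module.Basis (Fin n) K A) (hb : IsNaturalBasis b)
    (hperf : sqSpan K A = ⊤) : Module.Basis (Fin n) K A :=
  basisOfTopLeSpanOfCardEqFinrank (fun k => b k * b k)
    (by rw [← evo_sqSpan_eq b hb, hperf])
    (by rw [Module.finrank_eq_card_basis b, Fintype.card_fin])

lemma evoSqBasis_apply {n : ℕ} (b : Module.Basis (Fin n) K A) (hb : IsNaturalBasis b)
    (hperf : sqSpan K A = ⊤) (k : Fin n) : evoSqBasis b hb hperf k = b k * b k := by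
  simp [evoSqBasis, coe_basisOfTopLeSpanOfCardEqFinrank]

lemma evo_exists_perm {n : ℕ} (b b' : Module.Basis (Fin n) K A) (hb : IsNaturalBasis b)
    (hb' : IsNaturalBasis b') (hperf : sqSpan K A = ⊤) :
    ∃ σ : Equiv.Perm (Fin n), ∃ c : Fin n → K, (∀ j, c j ≠ 0) ∧
      ∀ j, b' j = c j • b (σ j) := by
  classical
  set b2 := evoSqBasis b hb hperf with hb2
  have hC : ∀ j m, j ≠ m → ∀ k, b.repr (b' j) k * b.repr (b' m) k = 0 := by
    intro j m hjm k
    have h0 : ∑ k, (b.repr (b' j) k * b.repr (b' m) k) • b2 k = 0 := by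
      simp only [hb2, evoSqBasis_apply b hb hperf]
      rw [← evo_mul_eq_sum_sq b hb, hb' j m hjm]
    exact Fintype.linearIndependent_iff.mp b2.linearIndependent _ h0 k
  set S : Fin n → Finset (Fin n) := fun j => (b.repr (b' j)).support with hS
  have hne : ∀ j, (S j).Nonempty := by
    intro j
    rw [hS, Finsupp.support_nonempty_iff]
    simp only [ne_eq, EmbeddingLike.map_eq_zero_iff]
    exact b'.ne_zero j
  have hdisj : ∀ j m, j ≠ m → Disjoint (S j) (S m) := by
    intro j m hjm
    rw [Finset.disjoint_left]
    intro k hk hk'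
    rw [hS, Finsupp.mem_support_iff] at hk hk'
    rcases mul_eq_zero.mp (hC j m hjm k) with h | h
    exacts [hk h, hk' h]
  have hcover : ∀ k, ∃ j, k ∈ S j := by
    intro k
    by_contra h
    push_neg at h
    have hzero : ∀ j, b.coord k (b' j) = 0 := by
      intro j
      have := h j
      rw [hS, Finsupp.mem_support_iff, not_not] at this
      simpa [Module.Basis.coord] using this
    have : b.coord k = 0 := b'.ext fun j => by rw [hzero j]; rfl
    have h1 : b.coord k (b k) = 1 := by simp
    rw [this] at h1
    simp at h1
  have hunion : Finset.univ.biUnion S = Finset.univ := by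
    ext k
    simpa using hcover k
  have hsum : ∑ j, (S j).card = n := by
    rw [← Finset.card_biUnion (fun j _ m _ hjm => hdisj j m hjm), hunion,
      Finset.card_univ, Fintype.card_fin]
  have hone : ∀ j, (S j).card = 1 := by
    have hle : ∀ j ∈ Finset.univ, 1 ≤ (S j).card := fun j _ =>
      Finset.Nonempty.card_pos (hne j)
    have := (Finset.sum_eq_sum_iff_of_le hle).mp (by
      simp only [Finset.sum_const, Finset.card_univ, Fintype.card_fin, smul_eq_mul, mul_one]
      exact hsum.symm)
    intro j; exact (this j (Finset.mem_univ j)).symm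
  choose σ0 hσ0 using fun j => Finset.card_eq_one.mp (hone j)
  have hmem : ∀ k j, k ∈ S j ↔ k = σ0 j := by
    intro k j; rw [hσ0 j, Finset.mem_singleton]
  have hinj : Function.Injective σ0 := by
    intro j m hjm
    by_contra h
    have h1 : σ0 j ∈ S j := (hmem _ _).mpr rfl
    have h2 : σ0 j ∈ S m := (hmem _ _).mpr hjm
    exact (Finset.disjoint_left.mp (hdisj j m h) h1) h2
  refine ⟨Equiv.ofBijective σ0 (Finite.injective_iff_bijective.mp hinj),
    fun j => b.repr (b' j) (σ0 j), fun j => ?_, fun j => ?_⟩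
  · have : σ0 j ∈ S j := (hmem _ _).mpr rfl
    rwa [hS, Finsupp.mem_support_iff] at this
  · simp only [Equiv.ofBijective_apply]
    conv_lhs => rw [← b.sum_repr (b' j)]
    rw [Finset.sum_eq_single (σ0 j)]
    · intro m _ hm
      have : m ∉ S j := by rw [hmem]; exact hm
      rw [hS, Finsupp.mem_support_iff, not_not] at this
      rw [this, zero_smul]
    · intro h; exact absurd (Finset.mem_univ _) h

lemma evo_repr_rel {n : ℕ} (b b' : Module.Basis (Fin n) K A) (σ : Equiv.Perm (Fin n))
    (c : Fin n → K) (hbb' : ∀ j, b' j = c j • b (σ j)) (x : A) (l : Fin n) :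
    b'.repr x l * c l = b.repr x (σ l) := by
  conv_rhs => rw [← b'.sum_repr x]
  simp only [hbb', smul_smul, map_sum, map_smul, Finsupp.coe_finset_sum, Finset.sum_apply,
    Finsupp.coe_smul, Pi.smul_apply, Module.Basis.repr_self, Finsupp.single_apply, smul_eq_mul]
  rw [Finset.sum_eq_single l]
  · simp [mul_comm]
  · intro m _ hm
    rw [if_neg (fun h => hm (σ.injective h)), mul_zero]
  · intro h; exact absurd (Finset.mem_univ _) h

lemma evo_structMatrix_zero_iff {n : ℕ} (b b' : Module.Basis (Fin n) K A)
    (σ : Equiv.Perm (Fin n)) (c : Fin n → K) (hc : ∀ j, c j ≠ 0)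
    (hbb' : ∀ j, b' j = c j • b (σ j)) (l j : Fin n) :
    structMatrix b' l j = 0 ↔ structMatrix b (σ l) (σ j) = 0 := by
  have key : structMatrix b' l j * c l = (c j * c j) * structMatrix b (σ l) (σ j) := by
    rw [structMatrix, Matrix.of_apply, evo_repr_rel b b' σ c hbb']
    rw [structMatrix, Matrix.of_apply]
    rw [hbb' j, smul_mul_assoc, mul_smul_comm, smul_smul, map_smul]
    simp [smul_eq_mul]
  constructor
  · intro h
    rw [h, zero_mul] at key
    rcases mul_eq_zero.mp key.symm with h' | h'
    · exact absurd (mul_eq_zero.mp h') (by simp [hc j])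
    · exact h'
  · intro h
    have := key
    rw [h, mul_zero] at this
    rcases mul_eq_zero.mp this with h' | h'
    · exact h'
    · exact absurd h' (hc l)

lemma evo_ideal_row_zero {n : ℕ} (b : Module.Basis (Fin n) K A) (t : Fin n)
    (hI : IsEvoIdeal (span K (⇑b '' {j | j ≠ t}))) :
    ∀ j, j ≠ t → structMatrix b t j = 0 := by
  intro j hj
  have hsub : span K (⇑b '' {j | j ≠ t}) ≤ LinearMap.ker (b.coord t) := by
    rw [span_le]
    rintro _ ⟨m, hm, rfl⟩
    simp only [SetLike.mem_coe, LinearMap.mem_ker, Module.Basis.coord_apply, Module.Basis.repr_self]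
    exact Finsupp.single_eq_of_ne (Ne.symm hm)
  have hmem : b j * b j ∈ span K (⇑b '' {j | j ≠ t}) :=
    hI (b j) (b j) (subset_span ⟨j, hj, rfl⟩)
  have := hsub hmem
  simpa [structMatrix, Module.Basis.coord_apply] using this

lemma evo_row_zero_ideal {n : ℕ} (b : Module.Basis (Fin n) K A) (hb : IsNaturalBasis b) (t : Fin n)
    (hrow : ∀ j, j ≠ t → structMatrix b t j = 0) :
    IsEvoIdeal (span K (⇑b '' {j | j ≠ t})) := by
  intro a x hx
  have : a * x = LinearMap.mulLeft K a x := rfl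
  rw [this]
  have hmap : LinearMap.mulLeft K a x ∈ Submodule.map (LinearMap.mulLeft K a)
      (span K (⇑b '' {j | j ≠ t})) := ⟨x, hx, rfl⟩
  rw [Submodule.map_span] at hmap
  refine span_le.mpr ?_ hmap
  rintro _ ⟨_, ⟨j, hj, rfl⟩, rfl⟩
  simp only [LinearMap.mulLeft_apply, SetLike.mem_coe]
  have hsq : b j * b j ∈ span K (⇑b '' {j | j ≠ t}) := by
    rw [show b j * b j = ∑ k, b.repr (b j * b j) k • b k from (b.sum_repr _).symm]
    refine Submodule.sum_mem _ fun k _ => ?_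
    by_cases hk : k = t
    · subst hk
      rw [show b.repr (b j * b j) k = structMatrix b k j from rfl, hrow j hj, zero_smul]
      exact Submodule.zero_mem _
    · exact Submodule.smul_mem _ _ (subset_span ⟨k, hk, rfl⟩)
  have hmul : a * b j = b.repr a j • (b j * b j) := by
    rw [evo_mul_eq_sum_sq b hb a (b j)]
    rw [Finset.sum_eq_single j]
    · simp
    · intro m _ hm
      simp [Finsupp.single_eq_of_ne hm]
    · intro h; exact absurd (Finset.mem_univ _) h
  rw [hmul]
  exact Submodule.smul_mem _ _ hsq

open Finset in
lemma evo_count_formula {n : ℕ} (ω : Fin n → Fin n → K) (t : Fin n)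
    (hrow : ∀ m, m ≠ t → ω t m = 0) :
    {p : Fin n × Fin n | p.1 ≠ t ∧ p.2 ≠ t ∧ ω p.1 p.2 = 0}.ncard + (2 * n - 1)
      = {p : Fin n × Fin n | ω p.1 p.2 = 0}.ncard + {l : Fin n | ω l t ≠ 0}.ncard := by
  classical
  have hn : 0 < n := t.pos
  have hconv : ∀ (P : Fin n × Fin n → Prop) (inst : DecidablePred P),
      {p | P p}.ncard = (univ.filter P).card := by
    intro P inst
    rw [← Set.ncard_coe_finset]
    congr 1
    ext p; simp
  have hconv1 : ∀ (P : Fin n → Prop) (inst : DecidablePred P),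
      {l | P l}.ncard = (univ.filter P).card := by
    intro P inst
    rw [← Set.ncard_coe_finset]
    congr 1
    ext p; simp
  rw [hconv _ _, hconv _ _, hconv1 _ _]
  set N := univ.filter (fun p : Fin n × Fin n => p.1 ≠ t ∧ p.2 ≠ t ∧ ω p.1 p.2 = 0) with hNdef
  set Zf := univ.filter (fun p : Fin n × Fin n => ω p.1 p.2 = 0) with hZdef
  set Rf := univ.filter (fun p : Fin n × Fin n => p.1 = t ∧ ω p.1 p.2 = 0) with hRdef
  set Cf := univ.filter (fun p : Fin n × Fin n => p.1 ≠ t ∧ p.2 = t ∧ ω p.1 p.2 = 0) with hCdef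
  set Df := univ.filter (fun l : Fin n => ω l t ≠ 0) with hDdef
  set e : ℕ := if ω t t = 0 then 1 else 0 with hedef
  have he : e ≤ 1 := by rw [hedef]; split <;> omega
  have hZ : Zf.card = N.card + Rf.card + Cf.card := by
    have hun : Zf = (N ∪ Rf) ∪ Cf := by
      ext p
      simp only [hNdef, hZdef, hRdef, hCdef, Finset.mem_filter, Finset.mem_union,
        Finset.mem_univ, true_and]
      tauto
    rw [hun, Finset.card_union_of_disjoint, Finset.card_union_of_disjoint]
    · rw [Finset.disjoint_left]; intro p hp hp'
      simp only [hNdef, hRdef, Finset.mem_filter, Finset.mem_univ, true_and] at hp hp'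
      exact hp.1 hp'.1
    · rw [Finset.disjoint_left]; intro p hp hp'
      simp only [hNdef, hRdef, hCdef, Finset.mem_filter, Finset.mem_union,
        Finset.mem_univ, true_and] at hp hp'
      rcases hp with h | h
      · exact h.2.1 hp'.2.1
      · exact hp'.1 h.1
  have hR : Rf.card = (n - 1) + e := by
    have hprod : Rf = {t} ×ˢ univ.filter (fun m => ω t m = 0) := by
      ext ⟨k, m⟩
      simp only [hRdef, Finset.mem_filter, Finset.mem_univ, true_and, Finset.mem_product,
        Finset.mem_singleton]
      constructor
      · rintro ⟨rfl, h⟩; exact ⟨rfl, h⟩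
      · rintro ⟨rfl, h⟩; exact ⟨rfl, h⟩
    rw [hprod, Finset.card_product, Finset.card_singleton, one_mul]
    by_cases h : ω t t = 0
    · have : univ.filter (fun m => ω t m = 0) = univ := by
        ext m; simp only [Finset.mem_filter, Finset.mem_univ, true_and, iff_true]
        by_cases hm : m = t
        · rw [hm]; exact h
        · exact hrow m hm
      rw [this, Finset.card_univ, Fintype.card_fin, hedef, if_pos h]
      omega
    · have : univ.filter (fun m => ω t m = 0) = univ.erase t := by
        ext m; simp only [Finset.mem_filter, Finset.mem_univ, true_and, Finset.mem_erase,
          and_true]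
        constructor
        · intro hm; rintro rfl; exact h hm
        · intro hm; exact hrow m hm
      rw [this, Finset.card_erase_of_mem (Finset.mem_univ t), Finset.card_univ,
        Fintype.card_fin, hedef, if_neg h]
      omega
  have hC : Cf.card + e + Df.card = n := by
    have hprod : Cf = (univ.filter fun k => k ≠ t ∧ ω k t = 0) ×ˢ {t} := by
      ext ⟨k, m⟩
      simp only [hCdef, Finset.mem_filter, Finset.mem_univ, true_and, Finset.mem_product,
        Finset.mem_singleton]
      constructor
      · rintro ⟨h1, rfl, h3⟩; exact ⟨⟨h1, h3⟩, rfl⟩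
      · rintro ⟨⟨h1, h3⟩, rfl⟩; exact ⟨h1, rfl, h3⟩
    rw [hprod, Finset.card_product, Finset.card_singleton, mul_one]
    have hpart : ((univ.filter fun k => k ≠ t ∧ ω k t = 0) ∪
        ((univ.filter fun k => k = t ∧ ω k t = 0) ∪ Df)) = univ := by
      ext k
      simp only [hDdef, Finset.mem_union, Finset.mem_filter, Finset.mem_univ, true_and,
        iff_true]
      by_cases h0 : ω k t = 0 <;> by_cases hk : k = t <;> tauto
    have hd1 : Disjoint (univ.filter fun k => k ≠ t ∧ ω k t = 0)
        ((univ.filter fun k => k = t ∧ ω k t = 0) ∪ Df) := by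
      rw [Finset.disjoint_left]; intro k hk hk'
      simp only [hDdef, Finset.mem_filter, Finset.mem_univ, true_and,
        Finset.mem_union] at hk hk'
      rcases hk' with h | h
      · exact hk.1 h.1
      · exact h hk.2
    have hd2 : Disjoint (univ.filter fun k => k = t ∧ ω k t = 0) Df := by
      rw [Finset.disjoint_left]; intro k hk hk'
      simp only [hDdef, Finset.mem_filter, Finset.mem_univ, true_and] at hk hk'
      exact hk' hk.2
    have hcard := congrArg Finset.card hpart
    rw [Finset.card_union_of_disjoint hd1, Finset.card_union_of_disjoint hd2,
      Finset.card_univ, Fintype.card_fin] at hcard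
    have he1 : (univ.filter fun k => k = t ∧ ω k t = 0).card = e := by
      by_cases h : ω t t = 0
      · have : (univ.filter fun k => k = t ∧ ω k t = 0) = {t} := by
          ext k
          simp only [Finset.mem_filter, Finset.mem_univ, true_and, Finset.mem_singleton]
          constructor
          · rintro ⟨rfl, _⟩; rfl
          · rintro rfl; exact ⟨rfl, h⟩
        rw [this, Finset.card_singleton, hedef, if_pos h]
      · have : (univ.filter fun k => k = t ∧ ω k t = 0) = ∅ := by
          ext k
          simp only [Finset.mem_filter, Finset.mem_univ, true_and, Finset.notMem_empty,
            iff_false, not_and]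
          rintro rfl; exact h
        rw [this, Finset.card_empty, hedef, if_neg h]
    omega
  omega

lemma evo_ncard_block {n : ℕ} {K : Type*} [Field K] (σ : Equiv.Perm (Fin n))
    (M ω : Fin n → Fin n → K) (t0 : Fin n)
    (hM : ∀ l j, M l j = 0 ↔ ω (σ l) (σ j) = 0) :
    {p : Fin n × Fin n | p.1 ≠ t0 ∧ p.2 ≠ t0 ∧ M p.1 p.2 = 0}.ncard
      = {p : Fin n × Fin n | p.1 ≠ σ t0 ∧ p.2 ≠ σ t0 ∧ ω p.1 p.2 = 0}.ncard := by
  have hinj : Function.Injective (fun p : Fin n × Fin n => (σ p.1, σ p.2)) := by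
    intro p q h
    simp only [Prod.mk.injEq] at h
    exact Prod.ext (σ.injective h.1) (σ.injective h.2)
  have himg : (fun p : Fin n × Fin n => (σ p.1, σ p.2)) ''
      {p | p.1 ≠ t0 ∧ p.2 ≠ t0 ∧ M p.1 p.2 = 0}
      = {p | p.1 ≠ σ t0 ∧ p.2 ≠ σ t0 ∧ ω p.1 p.2 = 0} := by
    ext ⟨k, m⟩
    constructor
    · rintro ⟨⟨l, j⟩, ⟨h1, h2, h3⟩, heq⟩
      simp only [Prod.mk.injEq] at heq
      obtain ⟨rfl, rfl⟩ := heq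
      exact ⟨fun h => h1 (σ.injective h), fun h => h2 (σ.injective h), (hM l j).mp h3⟩
    · rintro ⟨h1, h2, h3⟩
      refine ⟨(σ.symm k, σ.symm m), ⟨?_, ?_, ?_⟩, by simp⟩
      · intro h
        apply h1
        simp only at h
        rw [show k = σ (σ.symm k) from (σ.apply_symm_apply k).symm, h]
      · intro h
        apply h2
        simp only at h
        rw [show m = σ (σ.symm m) from (σ.apply_symm_apply m).symm, h]
      · rw [hM]; simpa using h3
  rw [← himg, Set.ncard_image_of_injective _ hinj]

end MainAux

/-- Let `A` be an `n`-dimensional perfect evolution algebra whose first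
`n - 1` natural basis vectors span an ideal. Then there is a natural basis of `A` with the
same block form but a different number of zeros in the upper-left `(n-1) × (n-1)` block if
and only if there is an index `i ∈ {1, …, n-1}` with `ω_{ij} = 0` for all `j ≠ i` (that is,
`i ∉ D¹(j)` for every `j ≠ i`) and `|D¹(i)| ≠ |D¹(n)|`. -/
theorem zero_count_not_invariant_iff
    {K A : Type*} [Field K] [NonUnitalNonAssocCommRing A] [Module K A]
    [SMulCommClass K A A] [IsScalarTower K A A]
    {n : ℕ} (hn : 0 < n) (b : Module.Basis (Fin n) K A) (hb : IsNaturalBasis b)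
    (hperf : IsPerfectEvo K A)
    (hI : IsEvoIdeal (Submodule.span K (⇑b '' {j : Fin n | (j : ℕ) < n - 1}))) :
    (∃ b' : Module.Basis (Fin n) K A, IsNaturalBasis b' ∧
        IsEvoIdeal (Submodule.span K (⇑b' '' {j : Fin n | (j : ℕ) < n - 1})) ∧
        {p : Fin n × Fin n | (p.1 : ℕ) < n - 1 ∧ (p.2 : ℕ) < n - 1 ∧
            structMatrix b' p.1 p.2 = 0}.ncard ≠
          {p : Fin n × Fin n | (p.1 : ℕ) < n - 1 ∧ (p.2 : ℕ) < n - 1 ∧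
            structMatrix b p.1 p.2 = 0}.ncard) ↔
      ∃ i : Fin n, (i : ℕ) < n - 1 ∧
        (∀ j : Fin n, j ≠ i → structMatrix b i j = 0) ∧
        {l : Fin n | structMatrix b l i ≠ 0}.ncard ≠
          {l : Fin n | structMatrix b l ⟨n - 1, by omega⟩ ≠ 0}.ncard := by
  classical
  have hp : sqSpan K A = ⊤ := hperf
  set last : Fin n := ⟨n - 1, by omega⟩ with hlastdef
  have hlt : ∀ j : Fin n, ((j : ℕ) < n - 1 ↔ j ≠ last) := by
    intro j
    have hj := j.isLt
    constructor
    · intro h heq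
      rw [heq] at h
      simp only [hlastdef] at h
      omega
    · intro h
      have : (j : ℕ) ≠ n - 1 := fun hc => h (Fin.ext hc)
      omega
  have hset0 : {j : Fin n | (j : ℕ) < n - 1} = {j | j ≠ last} := Set.ext hlt
  rw [hset0] at hI
  have hrowlast : ∀ j, j ≠ last → structMatrix b last j = 0 := evo_ideal_row_zero b last hI
  have hblock : ∀ (b'' : Module.Basis (Fin n) K A),
      {p : Fin n × Fin n | (p.1 : ℕ) < n - 1 ∧ (p.2 : ℕ) < n - 1 ∧
        structMatrix b'' p.1 p.2 = 0}
      = {p : Fin n × Fin n | p.1 ≠ last ∧ p.2 ≠ last ∧ structMatrix b'' p.1 p.2 = 0} := by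
    intro b''
    ext p
    simp only [Set.mem_setOf_eq, hlt]
  constructor
  · rintro ⟨b', hb', hI', hcount⟩
    rw [hset0] at hI'
    obtain ⟨σ, c, hc, hbb'⟩ := evo_exists_perm b b' hb hb' hp
    have hzero : ∀ l j, structMatrix b' l j = 0 ↔ structMatrix b (σ l) (σ j) = 0 :=
      evo_structMatrix_zero_iff b b' σ c hc hbb'
    have hrow' : ∀ j, j ≠ last → structMatrix b' last j = 0 := evo_ideal_row_zero b' last hI'
    have hrowt : ∀ m, m ≠ σ last → structMatrix b (σ last) m = 0 := by
      intro m hm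
      have hj : σ.symm m ≠ last := by
        intro h
        apply hm
        rw [show m = σ (σ.symm m) from (σ.apply_symm_apply m).symm, h]
      have := (hzero last (σ.symm m)).mp (hrow' _ hj)
      rwa [σ.apply_symm_apply] at this
    rw [hblock b', hblock b] at hcount
    have hN' := evo_ncard_block σ (structMatrix b') (structMatrix b) last hzero
    rw [hN'] at hcount
    have hf1 := evo_count_formula (structMatrix b) (σ last) hrowt
    have hf2 := evo_count_formula (structMatrix b) last hrowlast
    have htne : σ last ≠ last := by
      intro h
      apply hcount
      rw [h]
    have hD : {l : Fin n | structMatrix b l (σ last) ≠ 0}.ncard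
        ≠ {l : Fin n | structMatrix b l last ≠ 0}.ncard := by
      intro h
      apply hcount
      rw [h] at hf1
      omega
    exact ⟨σ last, (hlt (σ last)).mpr htne, hrowt, hD⟩
  · rintro ⟨i, hi, hrowi, hD⟩
    have hine : i ≠ last := (hlt i).mp hi
    set σ : Equiv.Perm (Fin n) := Equiv.swap i last with hσdef
    have hσsymm : σ.symm = σ := Equiv.symm_swap i last
    have hσlast : σ last = i := Equiv.swap_apply_right i last
    set b'' : Module.Basis (Fin n) K A := b.reindex σ with hb''def
    have hb''app : ∀ j, b'' j = b (σ j) := by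
      intro j
      rw [hb''def, Module.Basis.reindex_apply, hσsymm]
    have hb''nat : IsNaturalBasis b'' := by
      intro l j hlj
      rw [hb''app, hb''app]
      exact hb _ _ fun h => hlj (σ.injective h)
    have hM : ∀ l j, structMatrix b'' l j = structMatrix b (σ l) (σ j) := by
      intro l j
      rw [structMatrix, structMatrix, Matrix.of_apply, Matrix.of_apply, hb''app,
        hb''def, Module.Basis.repr_reindex_apply, hσsymm]
    have hIdeal : IsEvoIdeal (span K (⇑b'' '' {j : Fin n | (j : ℕ) < n - 1})) := by
      rw [hset0]
      have himg : ⇑b'' '' {j | j ≠ last} = ⇑b '' {k | k ≠ i} := by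
        ext y
        constructor
        · rintro ⟨j, hj, rfl⟩
          refine ⟨σ j, ?_, (hb''app j).symm⟩
          intro h
          exact hj (σ.injective (by rw [h, hσlast]))
        · rintro ⟨k, hk, rfl⟩
          refine ⟨σ.symm k, ?_, ?_⟩
          · intro h
            apply hk
            rw [show k = σ (σ.symm k) from (σ.apply_symm_apply k).symm, h, hσlast]
          · rw [hb''app, σ.apply_symm_apply]
      rw [himg]
      exact evo_row_zero_ideal b hb i hrowi
    refine ⟨b'', hb''nat, hIdeal, ?_⟩
    rw [hblock b'', hblock b]
    have hzero : ∀ l j, structMatrix b'' l j = 0 ↔ structMatrix b (σ l) (σ j) = 0 := by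
      intro l j; rw [hM]
    have hN' := evo_ncard_block σ (structMatrix b'') (structMatrix b) last hzero
    rw [hσlast] at hN'
    rw [hN']
    have hf1 := evo_count_formula (structMatrix b) i hrowi
    have hf2 := evo_count_formula (structMatrix b) last hrowlast
    intro h
    apply hD
    rw [h] at hf1
    omega
end
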